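/- arXiv:1603.09401 — 5 statements merged into one kernel-verified Lean document; each statement's English description precedes it below -/
import Mathlib

section
/- Let R = F[x_1,...,x_n] be a polynomial ring over a field F. If f_1,...,f_k is a partial regular sequence of homogeneous polynomials and each f_i splits into a product of linear forms, f_i = ℓ_{i,1}···ℓ_{i,N_i}, then for any choice of indices j_1,...,j_k with 1 ≤ j_i ≤ N_i, the sequence of linear forms ℓ_{1,j_1},...,ℓ_{k,j_k} is also a partial regular sequence. -/
open MvPolynomial

/-- `f 0, f 1, ..., f (k-1)` is a partial regular sequence in `F[x_1,...,x_n]`: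
`f 0 ≠ 0` and each subsequent `f i` is a non-zero divisor in the quotient by the
ideal generated by its predecessors. -/
def IsPartialRegSeq (F : Type) [Field F] (σ : Type) {k : ℕ}
    (f : Fin k → MvPolynomial σ F) : Prop :=
  (∀ i : Fin k, i.val = 0 → f i ≠ 0) ∧
  ∀ i : Fin k, 0 < i.val →
    ∀ g : MvPolynomial σ F,
      Ideal.Quotient.mk (Ideal.span (f '' {j | j < i})) (g * f i) = 0 →
      Ideal.Quotient.mk (Ideal.span (f '' {j | j < i})) g = 0

/-! If `a, b` is a regular sequence modulo `I`, then `a` is regular modulo `I + (b)`. Moving `f m`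
past its successors one at a time, `f m` is thus regular modulo the ideal `J` generated by the
`f t` with `t < i`, `t ≠ m`. This lets one replace `f m = ℓ c` by its factor `ℓ`: if
`g * f i ∈ (ℓ) + J` then `c g * f i ∈ (f m) + J`, hence `c g ∈ (ℓ c) + J`, and the regularity
of `f m` modulo `J` turns this into `g ∈ (ℓ) + J`. Replacing the terms one at a time proves the
theorem. -/

section Regular

variable {A : Type*} [CommRing A]

def IsRegularMod (I : Ideal A) (a : A) : Prop :=
  ∀ z, z * a ∈ I → z ∈ I

namespace IsRegularMod

variable {I : Ideal A} {a b c : A}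

theorem of_dvd (hc : IsRegularMod I c) (hac : a ∣ c) : IsRegularMod I a := by
  obtain ⟨e, rfl⟩ := hac
  exact fun z hz => hc z (by simpa only [mul_assoc] using I.mul_mem_right e hz)

theorem sup_span_singleton_of_dvd (hc : IsRegularMod I c) (hac : a ∣ c)
    (hb : IsRegularMod (Ideal.span {c} ⊔ I) b) : IsRegularMod (Ideal.span {a} ⊔ I) b := by
  obtain ⟨e, rfl⟩ := hac
  intro z hz
  obtain ⟨w, u, hu, hzb⟩ := Ideal.mem_span_singleton_sup.1 hz
  have hez : e * z ∈ Ideal.span {a * e} ⊔ I := by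
    refine hb _ (Ideal.mem_span_singleton_sup.2 ⟨w, e * u, I.mul_mem_left e hu, ?_⟩)
    linear_combination e * hzb
  obtain ⟨v, u', hu', hez⟩ := Ideal.mem_span_singleton_sup.1 hez
  have hzv : z - v * a ∈ I := by
    refine hc _ ?_
    have : (z - v * a) * (a * e) = a * u' := by linear_combination -a * hez
    exact this ▸ I.mul_mem_left a hu'
  exact Ideal.mem_span_singleton_sup.2 ⟨v, _, hzv, by ring⟩

theorem sup_span_singleton_swap (ha : IsRegularMod I a)
    (hb : IsRegularMod (Ideal.span {a} ⊔ I) b) : IsRegularMod (Ideal.span {b} ⊔ I) a := by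
  intro z hz
  obtain ⟨c, u, hu, hza⟩ := Ideal.mem_span_singleton_sup.1 hz
  have hc : c ∈ Ideal.span {a} ⊔ I :=
    hb c (Ideal.mem_span_singleton_sup.2 ⟨z, -u, I.neg_mem hu, by linear_combination -hza⟩)
  obtain ⟨w, u', hu', hc⟩ := Ideal.mem_span_singleton_sup.1 hc
  have hzw : z - w * b ∈ I := by
    refine ha _ ?_
    have : (z - w * b) * a = u' * b + u := by linear_combination -hza - b * hc
    exact this ▸ I.add_mem (I.mul_mem_right b hu') hu
  exact Ideal.mem_span_singleton_sup.2 ⟨w, _, hzw, by ring⟩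

end IsRegularMod

theorem isRegularMod_bot_iff [IsDomain A] {a : A} : IsRegularMod ⊥ a ↔ a ≠ 0 := by
  simp only [IsRegularMod, Ideal.mem_bot, mul_eq_zero]
  exact ⟨fun h ha => one_ne_zero (h 1 (Or.inr ha)), fun ha z hz => hz.resolve_right ha⟩

def IsWeaklyRegularSeq {k : ℕ} (s : Fin k → A) : Prop :=
  ∀ i, IsRegularMod (Ideal.span (s '' {j | j < i})) (s i)

namespace IsWeaklyRegularSeq

variable {k : ℕ} {s : Fin k → A}

theorem isRegularMod_span_image_ne (hs : IsWeaklyRegularSeq s) (m : Fin k) (q : ℕ)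
    (hmq : ↑m ≤ q) : IsRegularMod (Ideal.span (s '' {t | ↑t < q ∧ t ≠ m})) (s m) := by
  induction q, hmq using Nat.le_induction with
  | base =>
    have hset : {t : Fin k | ↑t < (m : ℕ) ∧ t ≠ m} = {t | t < m} := by
      ext t
      simp only [Set.mem_ofPred_eq, Fin.lt_def, ne_eq, Fin.ext_iff]
      omega
    exact hset ▸ hs m
  | succ q hmq ih =>
    by_cases hp : ∃ p : Fin k, ↑p = q ∧ p ≠ m
    · obtain ⟨p, rfl, hpm⟩ := hp
      have hmp : (m : ℕ) < p := lt_of_le_of_ne hmq (Fin.val_ne_of_ne hpm.symm)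
      have hsucc : {t : Fin k | (t : ℕ) < p + 1 ∧ t ≠ m}
          = insert p {t : Fin k | (t : ℕ) < p ∧ t ≠ m} := by
        ext t
        simp only [Set.mem_insert_iff, Set.mem_ofPred_eq, ne_eq, Fin.ext_iff]
        omega
      have hprefix : {t : Fin k | t < p} = insert m {t : Fin k | (t : ℕ) < p ∧ t ≠ m} := by
        ext t
        simp only [Set.mem_insert_iff, Set.mem_ofPred_eq, Fin.lt_def, ne_eq, Fin.ext_iff]
        omega
      have hp_reg := hs p
      rw [hprefix, Set.image_insert_eq, Ideal.span_insert] at hp_reg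
      rw [hsucc, Set.image_insert_eq, Ideal.span_insert]
      exact ih.sup_span_singleton_swap hp_reg
    · push Not at hp
      have hset : {t : Fin k | (t : ℕ) < q + 1 ∧ t ≠ m}
          = {t : Fin k | (t : ℕ) < q ∧ t ≠ m} := by
        ext t
        have htq := hp t
        simp only [Set.mem_ofPred_eq, ne_eq, Fin.ext_iff] at htq ⊢
        omega
      exact hset ▸ ih

theorem update_of_dvd (hs : IsWeaklyRegularSeq s) {m : Fin k} {a : A} (ha : a ∣ s m) :
    IsWeaklyRegularSeq (Function.update s m a) := by
  intro i
  obtain hmi | him := lt_or_ge m i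
  · have hprefix : {j : Fin k | j < i} = insert m {t : Fin k | (t : ℕ) < i ∧ t ≠ m} := by
      ext t
      simp only [Set.mem_insert_iff, Set.mem_ofPred_eq, Fin.lt_def, ne_eq, Fin.ext_iff]
      omega
    have himage : Function.update s m a '' {t : Fin k | (t : ℕ) < i ∧ t ≠ m}
        = s '' {t : Fin k | (t : ℕ) < i ∧ t ≠ m} :=
      Set.image_congr fun t ht => Function.update_of_ne ht.2 _ _
    have hi_reg := hs i
    rw [hprefix, Set.image_insert_eq, Ideal.span_insert] at hi_reg ⊢
    rw [Function.update_self, himage, Function.update_of_ne hmi.ne']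
    exact (hs.isRegularMod_span_image_ne m i hmi.le).sup_span_singleton_of_dvd ha hi_reg
  · have himage : Function.update s m a '' {j | j < i} = s '' {j | j < i} :=
      Set.image_congr fun t ht => Function.update_of_ne (ne_of_lt (lt_of_lt_of_le ht him)) _ _
    rw [himage]
    rcases him.lt_or_eq with him | rfl
    · exact Function.update_of_ne him.ne a s ▸ hs i
    · exact (Function.update_self i a s).symm ▸ (hs i).of_dvd ha

theorem of_dvd (hs : IsWeaklyRegularSeq s) {g : Fin k → A} (hg : ∀ i, g i ∣ s i) :
    IsWeaklyRegularSeq g := by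
  classical
  suffices ∀ T : Finset (Fin k), IsWeaklyRegularSeq (T.piecewise g s) by
    simpa only [Finset.piecewise_univ] using this Finset.univ
  intro T
  induction T using Finset.induction_on with
  | empty => simpa only [Finset.piecewise_empty] using hs
  | insert m T hmT ih =>
    rw [Finset.piecewise_insert]
    exact ih.update_of_dvd (Finset.piecewise_eq_of_notMem _ _ _ hmT ▸ hg m)

end IsWeaklyRegularSeq

end Regular

theorem isPartialRegSeq_iff_isWeaklyRegularSeq {F σ : Type} [Field F] {k : ℕ}
    (f : Fin k → MvPolynomial σ F) : IsPartialRegSeq F σ f ↔ IsWeaklyRegularSeq f := by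
  have hfirst : ∀ i : Fin k, i.val = 0 → Ideal.span (f '' {j | j < i}) = ⊥ := fun i hi => by
    have hempty : {j | j < i} = ∅ :=
      Set.eq_empty_of_forall_notMem fun j hj => absurd (Fin.lt_def.1 hj) (by omega)
    rw [hempty, Set.image_empty, Ideal.span_empty]
  simp only [IsPartialRegSeq, Ideal.Quotient.eq_zero_iff_mem]
  constructor
  · rintro ⟨h0, hpos⟩ i
    rcases Nat.eq_zero_or_pos i with hi | hi
    · exact hfirst i hi ▸ isRegularMod_bot_iff.2 (h0 i hi)
    · exact hpos i hi
  · exact fun h => ⟨fun i hi => isRegularMod_bot_iff.1 (hfirst i hi ▸ h i), fun i _ => h i⟩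

theorem stmt2_general (F : Type) [Field F] (n k : ℕ) (N : Fin k → ℕ)
    (f : Fin k → MvPolynomial (Fin n) F)
    (hreg : IsPartialRegSeq F (Fin n) f)
    (ℓ : (i : Fin k) → Fin (N i) → MvPolynomial (Fin n) F)
    (hsplit : ∀ i, f i = ∏ t : Fin (N i), ℓ i t) :
    ∀ j : (i : Fin k) → Fin (N i),
      IsPartialRegSeq F (Fin n) (fun i => ℓ i (j i)) := by
  intro j
  rw [isPartialRegSeq_iff_isWeaklyRegularSeq] at hreg ⊢
  exact hreg.of_dvd fun i => hsplit i ▸ Finset.dvd_prod_of_mem _ (Finset.mem_univ _)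

/-- If `f 0, ..., f (k-1)` is a partial regular sequence of homogeneous polynomials,
and each `f i` splits into a product of linear forms `f i = ℓ i 0 ⋯ ℓ i (N i - 1)`,
then for every choice of indices `j i`, the linear forms `ℓ 0 (j 0), ..., ℓ (k-1) (j (k-1))`
again form a partial regular sequence. -/
theorem stmt2 (F : Type) [Field F] (n k : ℕ) (N : Fin k → ℕ)
    (f : Fin k → MvPolynomial (Fin n) F)
    (hhom : ∀ i, ∃ d : ℕ, 0 < d ∧ (f i).IsHomogeneous d)
    (hreg : IsPartialRegSeq F (Fin n) f)
    (ℓ : (i : Fin k) → Fin (N i) → MvPolynomial (Fin n) F)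
    (hlin : ∀ i t, (ℓ i t).IsHomogeneous 1)
    (hsplit : ∀ i, f i = ∏ t : Fin (N i), ℓ i t) :
    ∀ j : (i : Fin k) → Fin (N i),
      IsPartialRegSeq F (Fin n) (fun i => ℓ i (j i)) :=
  stmt2_general F n k N f hreg ℓ hsplit
end

section
/- Suppose f_1 = x_1·L_1, ..., f_n = x_n·L_n is a regular sequence in F[x_1,...,x_n], where each L_i is a linear form. Then the quotient F[x_1,...,x_n]/⟨f_1,...,f_n⟩ is spanned, as an F-vector space, by the equivalence classes of the square-free monomials of F[x_1,...,x_n]. -/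
/-!
Along a regular sequence of quadrics the Hilbert series of `R/(f₁,…,f_k)` is
`(1 - t²)ᵏ/(1 - t)ⁿ`, so for `k = n` it is `(1 + t)ⁿ` and `R/I` vanishes in degree `n + 1`.
Hence every variable lies in the radical of `I = (xᵢLᵢ)ᵢ`, i.e. the `xᵢLᵢ` have no common
nonzero zero, which by linear algebra means: for every `S`, the linear forms `xᵢ (i ∈ S)`,
`Lᵢ (i ∉ S)` are linearly independent. In particular the `x₀`-coefficient `c` of `L₀` is nonzero.
This condition survives substituting `x₀ := 0`, or `x₀ := x₀ - c⁻¹L₀` (which does not involve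
`x₀`), into the remaining `Lᵢ`, which drives an induction on `n`: a polynomial is reduced
modulo `x₀` by the first substitution, and a multiple of `x₀` modulo `L₀` by the second, since
`x₀L₀ ∈ I`.
-/

open MvPolynomial

open DirectSum

section GradedQuotient

variable {F A : Type*} [Field F] [CommRing A] [Algebra F A] (𝒜 : ℕ → Submodule F A)

def homogeneousPart (I : Ideal A) (d : ℕ) : Submodule F (𝒜 d) :=
  (I.restrictScalars F).comap (𝒜 d).subtype

/-- For a homogeneous ideal `I` this is `dim_F (A/I)_d`. -/
noncomputable def hilbertFunction (I : Ideal A) (d : ℕ) : ℕ :=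
  Module.finrank F (𝒜 d ⧸ homogeneousPart 𝒜 I d)

noncomputable def hilbertSeries (I : Ideal A) : PowerSeries ℤ :=
  PowerSeries.mk fun d => (hilbertFunction 𝒜 I d : ℤ)

variable {𝒜}

lemma mem_of_hilbertFunction_eq_zero [∀ d, Module.Finite F (𝒜 d)] {I : Ideal A} {d : ℕ}
    (h : hilbertFunction 𝒜 I d = 0) {u : A} (hu : u ∈ 𝒜 d) : u ∈ I := by
  have htop : homogeneousPart 𝒜 I d = ⊤ :=
    Submodule.Quotient.subsingleton_iff.mp (Module.finrank_zero_iff.mp h)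
  exact (htop ▸ Submodule.mem_top : (⟨u, hu⟩ : 𝒜 d) ∈ homogeneousPart 𝒜 I d)

variable [GradedAlgebra 𝒜]

lemma exists_decompose_sub_mul_mem {I : Ideal A} (hI : I.IsHomogeneous 𝒜) {f : A} {e : ℕ}
    (hf : f ∈ 𝒜 e) {u : A} (hu : u ∈ I ⊔ Ideal.span {f}) :
    ∃ g : A, ∀ d, (decompose 𝒜 u d : A) -
      (if e ≤ d then (decompose 𝒜 g (d - e) : A) * f else 0) ∈ I := by
  obtain ⟨y, hy, z, hz, rfl⟩ := Submodule.mem_sup.mp hu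
  obtain ⟨g, rfl⟩ := Ideal.mem_span_singleton'.mp hz
  refine ⟨g, fun d => ?_⟩
  rw [decompose_add, DirectSum.add_apply, Submodule.coe_add,
    coe_decompose_mul_of_right_mem 𝒜 d hf, add_sub_cancel_right]
  exact hI.mem_iff.mp hy d

lemma mem_of_mem_sup_span_singleton_of_lt {I : Ideal A} (hI : I.IsHomogeneous 𝒜) {f : A}
    {e d : ℕ} (hf : f ∈ 𝒜 e) {u : A} (hu : u ∈ 𝒜 d) (hmem : u ∈ I ⊔ Ideal.span {f})
    (hde : d < e) : u ∈ I := by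
  obtain ⟨g, hg⟩ := exists_decompose_sub_mul_mem hI hf hmem
  simpa [decompose_of_mem_same 𝒜 hu, if_neg (not_le.mpr hde)] using hg d

lemma exists_mem_sub_mul_mem {I : Ideal A} (hI : I.IsHomogeneous 𝒜) {f : A}
    {e d : ℕ} (hf : f ∈ 𝒜 e) {u : A} (hu : u ∈ 𝒜 d) (hmem : u ∈ I ⊔ Ideal.span {f})
    (hed : e ≤ d) : ∃ v ∈ 𝒜 (d - e), u - v * f ∈ I := by
  obtain ⟨g, hg⟩ := exists_decompose_sub_mul_mem hI hf hmem
  refine ⟨_, (decompose 𝒜 g (d - e)).2, ?_⟩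
  simpa [decompose_of_mem_same 𝒜 hu, if_pos hed] using hg d

lemma hilbertFunction_sup_span_singleton_of_lt {I : Ideal A} (hI : I.IsHomogeneous 𝒜) {f : A}
    {e d : ℕ} (hf : f ∈ 𝒜 e) (hde : d < e) :
    hilbertFunction 𝒜 (I ⊔ Ideal.span {f}) d = hilbertFunction 𝒜 I d := by
  have : homogeneousPart 𝒜 (I ⊔ Ideal.span {f}) d = homogeneousPart 𝒜 I d := by
    ext u
    exact ⟨fun hu => mem_of_mem_sup_span_singleton_of_lt hI hf u.2 hu hde,
      fun hu => Ideal.mem_sup_left hu⟩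
  rw [hilbertFunction, this, hilbertFunction]

-- `0 → (A/I)_{d-e} → (A/I)_d → (A/(I + (f)))_d → 0`, the first map being multiplication
-- by `f`, is exact.
lemma hilbertFunction_sup_span_singleton_add [∀ d, Module.Finite F (𝒜 d)] {I : Ideal A}
    (hI : I.IsHomogeneous 𝒜) {f : A} {e d : ℕ} (hf : f ∈ 𝒜 e) (hreg : ∀ g, g * f ∈ I → g ∈ I)
    (hed : e ≤ d) :
    hilbertFunction 𝒜 (I ⊔ Ideal.span {f}) d + hilbertFunction 𝒜 I (d - e) =
      hilbertFunction 𝒜 I d := by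
  have hle : homogeneousPart 𝒜 I d ≤ homogeneousPart 𝒜 (I ⊔ Ideal.span {f}) d :=
    fun u hu => Ideal.mem_sup_left hu
  set π := Submodule.factor hle
  have hmul : ∀ v : 𝒜 (d - e), (v : A) * f ∈ 𝒜 d := fun v => by
    simpa [Nat.sub_add_cancel hed] using SetLike.GradedMul.mul_mem v.2 hf
  set Φ : 𝒜 (d - e) →ₗ[F] 𝒜 d ⧸ homogeneousPart 𝒜 I d := (homogeneousPart 𝒜 I d).mkQ ∘ₗ
    LinearMap.codRestrict (𝒜 d) (LinearMap.mulRight F f ∘ₗ (𝒜 (d - e)).subtype) hmul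
  have hkerΦ : LinearMap.ker Φ = homogeneousPart 𝒜 I (d - e) := by
    ext v
    simp only [Φ, LinearMap.mem_ker, LinearMap.comp_apply, Submodule.mkQ_apply,
      Submodule.Quotient.mk_eq_zero]
    exact ⟨hreg v, fun hv => I.mul_mem_right f hv⟩
  have hrange : LinearMap.range Φ = LinearMap.ker π := by
    ext y
    obtain ⟨u, rfl⟩ := Submodule.mkQ_surjective _ y
    simp only [LinearMap.mem_range, LinearMap.mem_ker, π, Submodule.mkQ_apply,
      Submodule.mapQ_apply, LinearMap.id_apply, Submodule.Quotient.mk_eq_zero]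
    constructor
    · rintro ⟨v, hv⟩
      show (u : A) ∈ I ⊔ Ideal.span {f}
      have hvu : (v : A) * f - u ∈ I := (Submodule.Quotient.eq (homogeneousPart 𝒜 I d)).mp hv
      have hvf : (v : A) * f ∈ I ⊔ Ideal.span {f} :=
        Ideal.mem_sup_right (Ideal.mul_mem_left _ _ (Ideal.mem_span_singleton_self f))
      simpa using Ideal.sub_mem _ hvf (Ideal.mem_sup_left hvu)
    · intro hu
      obtain ⟨v, hv, hsub⟩ := exists_mem_sub_mul_mem hI hf u.2 hu hed
      refine ⟨⟨v, hv⟩, (Submodule.Quotient.eq _).mpr ?_⟩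
      show (v : A) * f - u ∈ I
      simpa using I.neg_mem hsub
  have hπ := LinearMap.finrank_range_add_finrank_ker π
  have hΦ := LinearMap.finrank_range_add_finrank_ker Φ
  have hq := Submodule.finrank_quotient_add_finrank (homogeneousPart 𝒜 I (d - e))
  rw [LinearMap.range_eq_top.mpr (Submodule.factor_surjective hle), finrank_top] at hπ
  rw [hrange, hkerΦ] at hΦ
  simp only [hilbertFunction]
  omega

lemma hilbertSeries_sup_span_singleton [∀ d, Module.Finite F (𝒜 d)] {I : Ideal A}
    (hI : I.IsHomogeneous 𝒜) {f : A} {e : ℕ} (hf : f ∈ 𝒜 e) (hreg : ∀ g, g * f ∈ I → g ∈ I) :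
    hilbertSeries 𝒜 (I ⊔ Ideal.span {f}) = (1 - PowerSeries.X ^ e) * hilbertSeries 𝒜 I := by
  ext d
  simp only [sub_mul, one_mul, map_sub, PowerSeries.coeff_X_pow_mul', hilbertSeries,
    PowerSeries.coeff_mk]
  split_ifs with hed
  · rw [← hilbertFunction_sup_span_singleton_add hI hf hreg hed]
    push_cast
    ring
  · rw [hilbertFunction_sup_span_singleton_of_lt hI hf (not_le.mp hed), sub_zero]

lemma hilbertSeries_span_image_lt [∀ d, Module.Finite F (𝒜 d)] {n e : ℕ} {f : Fin n → A}
    (hf : ∀ i, f i ∈ 𝒜 e)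
    (hreg : ∀ i g, g * f i ∈ Ideal.span (f '' {j | j < i}) → g ∈ Ideal.span (f '' {j | j < i}))
    {k : ℕ} (hk : k ≤ n) :
    hilbertSeries 𝒜 (Ideal.span (f '' {j | (j : ℕ) < k})) =
      (1 - PowerSeries.X ^ e) ^ k * hilbertSeries 𝒜 ⊥ := by
  induction k with
  | zero => simp
  | succ k ih =>
    have hsplit : {j : Fin n | (j : ℕ) < k + 1} =
        insert ⟨k, Nat.lt_of_succ_le hk⟩ {j : Fin n | (j : ℕ) < k} := by
      ext j
      simp only [Set.mem_ofPred_eq, Set.mem_insert_iff, Fin.ext_iff]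
      omega
    have hhom : (Ideal.span (f '' {j | (j : ℕ) < k})).IsHomogeneous 𝒜 :=
      Ideal.homogeneous_span 𝒜 _ (by rintro _ ⟨j, -, rfl⟩; exact ⟨e, hf j⟩)
    rw [hsplit, Set.image_insert_eq, Ideal.span_insert, sup_comm,
      hilbertSeries_sup_span_singleton hhom (hf _) (hreg ⟨k, Nat.lt_of_succ_le hk⟩),
      ih (by omega), pow_succ]
    ring

end GradedQuotient

attribute [local instance] MvPolynomial.gradedAlgebra

namespace MvPolynomial

variable {σ F : Type*} [Fintype σ] [Field F]

instance (d : ℕ) : Module.Finite F (homogeneousSubmodule σ F d) :=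
  Module.Finite.iff_fg.mpr (homogeneousSubmodule_fg σ F d)

lemma finrank_homogeneousSubmodule (d : ℕ) :
    Module.finrank F (homogeneousSubmodule σ F d) = (Fintype.card σ).multichoose d := by
  classical
  rw [(LinearEquiv.ofEq _ _ (homogeneousSubmodule_eq_finsupp_supported σ F d)).finrank_eq]
  refine (Module.finrank_eq_nat_card_basis (basisRestrictSupport F _)).trans ?_
  have : {x : σ →₀ ℕ | x.degree = d} =
      ↑(Finset.univ.finsuppAntidiag d : Finset (σ →₀ ℕ)) := by
    ext x
    simp [Finset.mem_finsuppAntidiag, Finsupp.degree_eq_sum]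
  rw [this, Nat.card_coe_set_eq, Set.ncard_coe_finset,
    Finset.card_finsuppAntidiag_nat_eq_multichoose, Finset.card_univ]

lemma hilbertSeries_bot :
    hilbertSeries (homogeneousSubmodule σ F) ⊥ = PowerSeries.invOneSubPow ℤ (Fintype.card σ) := by
  ext d
  have hbot : homogeneousPart (homogeneousSubmodule σ F) ⊥ d = ⊥ := by
    ext u
    simp [homogeneousPart]
  rw [hilbertSeries, PowerSeries.coeff_mk, hilbertFunction, hbot,
    (Submodule.quotEquivOfEqBot _ rfl).finrank_eq, finrank_homogeneousSubmodule]
  rcases Fintype.card σ with _ | m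
  · cases d <;> simp [PowerSeries.invOneSubPow_zero, PowerSeries.coeff_one]
  · rw [PowerSeries.invOneSubPow_val_succ_eq_mk_add_choose, PowerSeries.coeff_mk,
      Nat.multichoose_eq, show m + 1 + d - 1 = m + d by omega, Nat.choose_symm_add]

end MvPolynomial

section RegularSequence

variable {F : Type} [Field F]

lemma IsPartialRegSeq.mem_of_mul_mem {σ : Type} {n : ℕ} {f : Fin n → MvPolynomial σ F}
    (h : IsPartialRegSeq F σ f) (i : Fin n) (g : MvPolynomial σ F)
    (hg : g * f i ∈ Ideal.span (f '' {j | j < i})) : g ∈ Ideal.span (f '' {j | j < i}) := by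
  rcases Nat.eq_zero_or_pos i with hi | hi
  · have hempty : {j | j < i} = ∅ := Set.eq_empty_of_forall_notMem fun j hj => by
      simp [Fin.lt_def, hi] at hj
    rw [hempty, Set.image_empty, Ideal.span_empty, Ideal.mem_bot] at hg ⊢
    exact (mul_eq_zero.mp hg).resolve_right (h.1 i hi)
  · rw [← Ideal.Quotient.eq_zero_iff_mem] at hg ⊢
    exact h.2 i hi g hg

lemma PowerSeries.coeff_one_add_X_pow {R : Type*} [CommSemiring R] (n k : ℕ) :
    coeff k ((1 + X) ^ n : PowerSeries R) = n.choose k := by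
  have : ((1 + X) ^ n : PowerSeries R) = ((Polynomial.X + 1) ^ n : Polynomial R) := by
    push_cast
    ring
  rw [this, Polynomial.coeff_coe, Polynomial.coeff_X_add_one_pow]

theorem IsPartialRegSeq.mem_span_of_isHomogeneous {n : ℕ} {f : Fin n → MvPolynomial (Fin n) F}
    (hreg : IsPartialRegSeq F (Fin n) f) (hf : ∀ i, (f i).IsHomogeneous 2)
    {p : MvPolynomial (Fin n) F} (hp : p.IsHomogeneous (n + 1)) : p ∈ Ideal.span (Set.range f) := by
  have hS := hilbertSeries_span_image_lt (𝒜 := homogeneousSubmodule (Fin n) F) hf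
    hreg.mem_of_mul_mem le_rfl
  have hseries : (1 - PowerSeries.X ^ 2) ^ n * (PowerSeries.invOneSubPow ℤ n : PowerSeries ℤ) =
      (1 + PowerSeries.X) ^ n := by
    rw [show (1 - PowerSeries.X ^ 2 : PowerSeries ℤ) = (1 + PowerSeries.X) * (1 - PowerSeries.X) by
      ring, mul_pow, mul_assoc, ← PowerSeries.invOneSubPow_inv_eq_one_sub_pow, Units.inv_val,
      mul_one]
  rw [hilbertSeries_bot, Fintype.card_fin, hseries] at hS
  have h0 := congrArg (PowerSeries.coeff (n + 1)) hS
  rw [PowerSeries.coeff_one_add_X_pow, Nat.choose_succ_self, hilbertSeries, PowerSeries.coeff_mk,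
    Nat.cast_zero, Nat.cast_eq_zero] at h0
  have hall : {j : Fin n | (j : ℕ) < n} = Set.univ := Set.eq_univ_of_forall fun j => j.isLt
  rw [← Set.image_univ, ← hall]
  exact mem_of_hilbertFunction_eq_zero h0 hp

end RegularSequence

namespace MvPolynomial

section LinearForms

variable {σ F : Type*} [Fintype σ] [Field F]

lemma IsHomogeneous.eq_sum_coeff_smul_X {ℓ : MvPolynomial σ F} (hℓ : ℓ.IsHomogeneous 1) :
    ℓ = ∑ i, coeff (Finsupp.single i 1) ℓ • X i := by
  classical
  have hmem : ℓ ∈ homogeneousSubmodule σ F 1 := hℓ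
  rw [homogeneousSubmodule_one_eq_span_X] at hmem
  obtain ⟨c, rfl⟩ := (Submodule.mem_span_range_iff_exists_fun F).mp hmem
  simp [coeff_sum, coeff_X, Finsupp.single_left_inj]

lemma IsHomogeneous.aeval_eq_sum {A : Type*} [CommSemiring A] [Algebra F A]
    {ℓ : MvPolynomial σ F} (hℓ : ℓ.IsHomogeneous 1) (g : σ → A) :
    MvPolynomial.aeval g ℓ = ∑ i, coeff (Finsupp.single i 1) ℓ • g i := by
  conv_lhs => rw [hℓ.eq_sum_coeff_smul_X]
  simp [map_sum]

lemma exists_ne_zero_forall_eval_eq_zero [DecidableEq σ] {P : σ → MvPolynomial σ F}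
    (hP : ∀ i, (P i).IsHomogeneous 1) (h : ¬LinearIndependent F P) :
    ∃ p : σ → F, p ≠ 0 ∧ ∀ i, eval p (P i) = 0 := by
  obtain ⟨q, hq, i, hi⟩ := Fintype.not_linearIndependent_iff.mp h
  let M : Matrix σ σ F := Matrix.of fun i j => coeff (Finsupp.single j 1) (P i)
  have hqM : Matrix.vecMul q M = 0 := by
    ext j
    simpa [M, Matrix.vecMul, dotProduct, coeff_sum] using
      congrArg (coeff (Finsupp.single j 1)) hq
  obtain ⟨p, hp, hMp⟩ := Matrix.exists_mulVec_eq_zero_iff.mpr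
    (Matrix.exists_vecMul_eq_zero_iff.mp ⟨q, fun h0 => hi (congrFun h0 i), hqM⟩)
  refine ⟨p, hp, fun i => ?_⟩
  rw [show eval p (P i) = aeval p (P i) from rfl, (hP i).aeval_eq_sum]
  simpa [M, Matrix.mulVec, dotProduct] using congrFun hMp i

end LinearForms

section MixedIndependent

variable {σ F : Type*} [Field F]

noncomputable def spanXMul (L : σ → MvPolynomial σ F) : Ideal (MvPolynomial σ F) :=
  Ideal.span (Set.range fun i => X i * L i)

def IsMixedIndependent [DecidableEq σ] (L : σ → MvPolynomial σ F) : Prop :=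
  (∀ i, (L i).IsHomogeneous 1) ∧ ∀ S : Finset σ, LinearIndependent F (S.piecewise X L)

variable [Fintype σ] [DecidableEq σ]

theorem isMixedIndependent_of_X_mem_radical {L : σ → MvPolynomial σ F}
    (hL : ∀ i, (L i).IsHomogeneous 1) (hrad : ∀ i, X i ∈ (spanXMul L).radical) :
    IsMixedIndependent L := by
  refine ⟨hL, fun S => ?_⟩
  by_contra h
  have hP : ∀ i, (S.piecewise X L i).IsHomogeneous 1 := fun i => by
    by_cases hi : i ∈ S
    · simpa [hi] using isHomogeneous_X F i
    · simpa [hi] using hL i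
  obtain ⟨p, hp, hzero⟩ := exists_ne_zero_forall_eval_eq_zero hP h
  have hker : spanXMul L ≤ RingHom.ker (eval p) := by
    refine Ideal.span_le.mpr ?_
    rintro _ ⟨i, rfl⟩
    by_cases hi : i ∈ S
    · simpa [hi] using Or.inl (hzero i)
    · simpa [hi] using Or.inr (hzero i)
  refine hp (_root_.funext fun i => ?_)
  simpa using ((RingHom.ker_isPrime (eval p)).radical_le_iff.mpr hker) (hrad i)

lemma IsMixedIndependent.coeff_single_self_ne_zero {L : σ → MvPolynomial σ F}
    (hL : IsMixedIndependent L) (i : σ) : coeff (Finsupp.single i 1) (L i) ≠ 0 := by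
  intro hc
  set s := Finset.univ.erase i
  have hi : i ∉ s := Finset.notMem_erase i _
  refine (hL.2 s).notMem_span_image hi ?_
  rw [Finset.piecewise_eq_of_notMem _ _ _ hi, (hL.1 i).eq_sum_coeff_smul_X,
    ← Finset.add_sum_erase _ _ (Finset.mem_univ i), hc, zero_smul, zero_add]
  refine Submodule.sum_mem _ fun j hj => Submodule.smul_mem _ _ (Submodule.subset_span ?_)
  exact ⟨j, hj, Finset.piecewise_eq_of_mem _ _ _ hj⟩

end MixedIndependent

section Squarefree

variable (σ R : Type*) [CommSemiring R]

noncomputable def squarefreeSpan : Submodule R (MvPolynomial σ R) :=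
  Submodule.span R (Set.range fun s : Finset σ => ∏ i ∈ s, X i)

variable {σ R} {τ : Type*}

lemma rename_mem_squarefreeSpan {f : σ → τ} (hf : Function.Injective f) {v : MvPolynomial σ R}
    (hv : v ∈ squarefreeSpan σ R) : rename f v ∈ squarefreeSpan τ R := by
  refine (Submodule.span_le (p := (squarefreeSpan τ R).comap (rename f).toLinearMap)).mpr ?_ hv
  rintro _ ⟨s, rfl⟩
  refine Submodule.subset_span ⟨s.map ⟨f, hf⟩, ?_⟩
  simp [Finset.prod_map]

lemma X_mul_rename_mem_squarefreeSpan {f : σ → τ} (hf : Function.Injective f) {k : τ}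
    (hk : ∀ i, f i ≠ k) {v : MvPolynomial σ R} (hv : v ∈ squarefreeSpan σ R) :
    X k * rename f v ∈ squarefreeSpan τ R := by
  refine (Submodule.span_le (p := (squarefreeSpan τ R).comap
    (LinearMap.mulLeft R (X k) ∘ₗ (rename f).toLinearMap))).mpr ?_ hv
  rintro _ ⟨s, rfl⟩
  have hks : k ∉ s.map ⟨f, hf⟩ := by
    simp only [Finset.mem_map, Function.Embedding.coeFn_mk, not_exists, not_and]
    exact fun i _ => hk i
  refine Submodule.subset_span ⟨Finset.cons k (s.map ⟨f, hf⟩) hks, ?_⟩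
  simp [Finset.prod_map]

end Squarefree

section Substitution

lemma aeval_sub_mem {σ R : Type*} [CommRing R] {J : Ideal (MvPolynomial σ R)}
    {g : σ → MvPolynomial σ R} (hg : ∀ i, g i - X i ∈ J) (p : MvPolynomial σ R) :
    aeval g p - p ∈ J := by
  rw [← Ideal.Quotient.eq]
  have : (Ideal.Quotient.mkₐ R J).comp (aeval g) = (Ideal.Quotient.mkₐ R J).comp (aeval X) :=
    algHom_ext fun i => by simpa [Ideal.Quotient.eq] using hg i
  simpa using DFunLike.congr_fun this p

variable {F : Type*} [Field F] {m : ℕ}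

noncomputable def substZero (w : MvPolynomial (Fin m) F) :
    MvPolynomial (Fin (m + 1)) F →ₐ[F] MvPolynomial (Fin m) F :=
  aeval (Fin.cases w X)

lemma rename_substZero_sub_mem (w : MvPolynomial (Fin m) F) (u : MvPolynomial (Fin (m + 1)) F) :
    rename Fin.succ (substZero w u) - u ∈ Ideal.span {X 0 - rename Fin.succ w} := by
  rw [substZero, comp_aeval_apply]
  refine aeval_sub_mem (fun i => ?_) u
  cases i using Fin.cases with
  | zero =>
    rw [Fin.cases_zero, ← neg_mem_iff, neg_sub]
    exact Ideal.mem_span_singleton_self _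
  | succ i => simp

lemma rename_substZero_of_isHomogeneous {w : MvPolynomial (Fin m) F}
    {ℓ : MvPolynomial (Fin (m + 1)) F} (hℓ : ℓ.IsHomogeneous 1) :
    rename Fin.succ (substZero w ℓ) =
      ℓ + coeff (Finsupp.single 0 1) ℓ • (rename Fin.succ w - X 0) := by
  have hsum := hℓ.eq_sum_coeff_smul_X
  calc rename Fin.succ (substZero w ℓ)
      = ∑ i, coeff (Finsupp.single i 1) ℓ • rename Fin.succ (Fin.cases w X i) := by
        rw [substZero, comp_aeval_apply, hℓ.aeval_eq_sum]
    _ = (∑ i, coeff (Finsupp.single i 1) ℓ • X i) +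
          coeff (Finsupp.single 0 1) ℓ • (rename Fin.succ w - X 0) := by
        simp only [Fin.sum_univ_succ, Fin.cases_zero, Fin.cases_succ, rename_X, smul_sub]
        abel
    _ = _ := by rw [← hsum]

lemma isHomogeneous_substZero {w : MvPolynomial (Fin m) F} (hw : w.IsHomogeneous 1)
    {ℓ : MvPolynomial (Fin (m + 1)) F} (hℓ : ℓ.IsHomogeneous 1) :
    (substZero w ℓ).IsHomogeneous 1 := by
  have h := hℓ.aeval (Fin.cases w X) (Fin.cases hw (isHomogeneous_X F))
  rwa [mul_one] at h

lemma linearIndependent_piecewise_substZero {L : Fin (m + 1) → MvPolynomial (Fin (m + 1)) F}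
    (hL : ∀ i, (L i).IsHomogeneous 1) {S' : Finset (Fin (m + 1))}
    (hind : LinearIndependent F (S'.piecewise X L)) {S : Finset (Fin m)}
    (hS : ∀ i, i.succ ∈ S' ↔ i ∈ S) {w : MvPolynomial (Fin m) F} {s : F}
    (hw : rename Fin.succ w - X 0 = s • S'.piecewise X L 0) :
    LinearIndependent F (S.piecewise X fun i => substZero w (L i.succ)) := by
  set P := S'.piecewise X L
  let t : Fin (m + 1) → F :=
    Fin.cases 0 fun i => if i ∈ S then 0 else coeff (Finsupp.single 0 1) (L i.succ) * s
  refine LinearIndependent.of_comp (rename Fin.succ).toLinearMap ?_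
  have hcomp : (rename Fin.succ).toLinearMap ∘ S.piecewise X (fun i => substZero w (L i.succ)) =
      (P + (t · • P 0)) ∘ Fin.succ := by
    funext i
    by_cases hi : i ∈ S
    · simp only [Function.comp_apply, Pi.add_apply, P, t, Fin.cases_succ, if_pos hi, zero_smul,
        add_zero, Finset.piecewise_eq_of_mem _ _ _ hi,
        Finset.piecewise_eq_of_mem _ _ _ ((hS i).mpr hi), AlgHom.toLinearMap_apply, rename_X]
    · simp only [Function.comp_apply, Pi.add_apply, P, t, Fin.cases_succ, if_neg hi,
        Finset.piecewise_eq_of_notMem _ _ _ hi,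
        Finset.piecewise_eq_of_notMem _ _ _ (mt (hS i).mp hi),
        AlgHom.toLinearMap_apply, rename_substZero_of_isHomogeneous (hL _), hw, smul_smul]
  rw [hcomp]
  exact ((linearIndependent_add_smul_iff (c := t) rfl).mpr hind).comp Fin.succ
    (Fin.succ_injective m)

lemma IsMixedIndependent.substZero_zero {L : Fin (m + 1) → MvPolynomial (Fin (m + 1)) F}
    (hL : IsMixedIndependent L) : IsMixedIndependent fun i => substZero 0 (L i.succ) := by
  refine ⟨fun i => isHomogeneous_substZero (isHomogeneous_zero _ _ _) (hL.1 _), fun S => ?_⟩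
  have h0 : (0 : Fin (m + 1)) ∉ S.map (Fin.succEmb m) := by simp [Fin.succ_ne_zero]
  refine linearIndependent_piecewise_substZero (s := -1) hL.1 (hL.2 (Finset.cons 0 _ h0))
    (fun i => ?_) ?_
  · simp [Fin.succ_ne_zero]
  · simp

lemma IsMixedIndependent.substZero_of_sub_eq {L : Fin (m + 1) → MvPolynomial (Fin (m + 1)) F}
    (hL : IsMixedIndependent L) {w : MvPolynomial (Fin m) F} (hw : w.IsHomogeneous 1) {s : F}
    (hws : rename Fin.succ w - X 0 = s • L 0) :
    IsMixedIndependent fun i => substZero w (L i.succ) := by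
  refine ⟨fun i => isHomogeneous_substZero hw (hL.1 _), fun S => ?_⟩
  have h0 : (0 : Fin (m + 1)) ∉ S.map (Fin.succEmb m) := by simp [Fin.succ_ne_zero]
  exact linearIndependent_piecewise_substZero hL.1 (hL.2 (S.map (Fin.succEmb m))) (fun i => by simp)
    (by rwa [Finset.piecewise_eq_of_notMem _ _ _ h0])

lemma exists_sub_rename_mem {L : Fin (m + 1) → MvPolynomial (Fin (m + 1)) F}
    (w : MvPolynomial (Fin m) F)
    (htop : squarefreeSpan (Fin m) F ⊔
      (spanXMul fun i => substZero w (L i.succ)).restrictScalars F = ⊤)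
    (g : MvPolynomial (Fin (m + 1)) F) :
    ∃ v ∈ squarefreeSpan (Fin m) F,
      g - rename Fin.succ v ∈ spanXMul L ⊔ Ideal.span {X 0 - rename Fin.succ w} := by
  set J := Ideal.span {X 0 - rename Fin.succ w}
  obtain ⟨v, hv, z, hz, hvz⟩ := Submodule.mem_sup.mp (htop ▸ Submodule.mem_top (x := substZero w g))
  refine ⟨v, hv, ?_⟩
  have hmap : Ideal.map (rename Fin.succ) (spanXMul fun i => substZero w (L i.succ)) ≤
      spanXMul L ⊔ J := by
    rw [spanXMul, Ideal.map_span, Ideal.span_le]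
    rintro _ ⟨_, ⟨i, rfl⟩, rfl⟩
    have hsplit : rename Fin.succ (X i * substZero w (L i.succ)) = X i.succ * L i.succ +
        X i.succ * (rename Fin.succ (substZero w (L i.succ)) - L i.succ) := by
      rw [map_mul, rename_X]
      ring
    rw [hsplit]
    exact add_mem (Ideal.mem_sup_left (Ideal.subset_span ⟨i.succ, rfl⟩))
      (Ideal.mem_sup_right (Ideal.mul_mem_left _ _ (rename_substZero_sub_mem w _)))
  have hg : g - rename Fin.succ v = rename Fin.succ z - (rename Fin.succ (substZero w g) - g) := by
    rw [← hvz, map_add]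
    ring
  rw [hg]
  exact sub_mem (hmap (Ideal.mem_map_of_mem _ hz))
    (Ideal.mem_sup_right (rename_substZero_sub_mem w g))

end Substitution

lemma squarefreeSpan_eq_top_of_isEmpty {σ R : Type*} [CommSemiring R] [IsEmpty σ] :
    squarefreeSpan σ R = ⊤ := by
  refine eq_top_iff.mpr fun g _ => ?_
  rw [eq_C_of_isEmpty g, ← mul_one (C _), ← smul_eq_C_mul, ← Finset.prod_empty (f := X)]
  exact Submodule.smul_mem _ _ (Submodule.subset_span ⟨∅, rfl⟩)

lemma X_zero_mul_mem_squarefreeSpan_sup {m : ℕ} {F : Type*} [Field F]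
    {L : Fin (m + 1) → MvPolynomial (Fin (m + 1)) F} {w : MvPolynomial (Fin m) F} {a : F}
    (hw : X 0 - rename Fin.succ w = a • L 0)
    (htop : squarefreeSpan (Fin m) F ⊔
      (spanXMul fun i => substZero w (L i.succ)).restrictScalars F = ⊤)
    (h : MvPolynomial (Fin (m + 1)) F) :
    X 0 * h ∈ squarefreeSpan (Fin (m + 1)) F ⊔ (spanXMul L).restrictScalars F := by
  obtain ⟨v, hv, hmem⟩ := exists_sub_rename_mem w htop h
  have hX0 : X 0 * (h - rename Fin.succ v) ∈ spanXMul L := by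
    obtain ⟨b, hb, _, hr, hbr⟩ := Submodule.mem_sup.mp hmem
    obtain ⟨r, rfl⟩ := Ideal.mem_span_singleton'.mp hr
    rw [← hbr, hw, mul_add, show X 0 * (r * a • L 0) = (a • r) * (X 0 * L 0) by
      simp only [smul_eq_C_mul]; ring]
    exact add_mem (Ideal.mul_mem_left _ _ hb) (Ideal.mul_mem_left _ _ (Ideal.subset_span ⟨0, rfl⟩))
  rw [show X 0 * h = X 0 * rename Fin.succ v + X 0 * (h - rename Fin.succ v) by ring]
  exact add_mem (Submodule.mem_sup_left (X_mul_rename_mem_squarefreeSpan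
    (Fin.succ_injective m) Fin.succ_ne_zero hv)) (Submodule.mem_sup_right hX0)

lemma squarefreeSpan_sup_eq_top_of_X_zero_mul_mem {m : ℕ} {F : Type*} [Field F]
    {L : Fin (m + 1) → MvPolynomial (Fin (m + 1)) F}
    (htop : squarefreeSpan (Fin m) F ⊔
      (spanXMul fun i => substZero 0 (L i.succ)).restrictScalars F = ⊤)
    (hX0 : ∀ h, X 0 * h ∈ squarefreeSpan (Fin (m + 1)) F ⊔ (spanXMul L).restrictScalars F) :
    squarefreeSpan (Fin (m + 1)) F ⊔ (spanXMul L).restrictScalars F = ⊤ := by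
  refine eq_top_iff.mpr fun g _ => ?_
  obtain ⟨v, hv, hmem⟩ := exists_sub_rename_mem 0 htop g
  rw [map_zero, sub_zero] at hmem
  obtain ⟨b, hb, _, hr, hbr⟩ := Submodule.mem_sup.mp hmem
  obtain ⟨r, rfl⟩ := Ideal.mem_span_singleton'.mp hr
  rw [show g = rename Fin.succ v + b + X 0 * r by linear_combination -hbr]
  exact add_mem (add_mem (Submodule.mem_sup_left (rename_mem_squarefreeSpan
    (Fin.succ_injective m) hv)) (Submodule.mem_sup_right hb)) (hX0 r)

theorem IsMixedIndependent.squarefreeSpan_sup_eq_top {F : Type*} [Field F] :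
    ∀ {n : ℕ} {L : Fin n → MvPolynomial (Fin n) F}, IsMixedIndependent L →
      squarefreeSpan (Fin n) F ⊔ (spanXMul L).restrictScalars F = ⊤
  | 0, _, _ => by rw [squarefreeSpan_eq_top_of_isEmpty, top_sup_eq]
  | m + 1, L, hL => by
    set c := coeff (Finsupp.single 0 1) (L 0)
    set w := -c⁻¹ • substZero 0 (L 0)
    have hw : X 0 - rename Fin.succ w = c⁻¹ • L 0 := by
      rw [map_smul, rename_substZero_of_isHomogeneous (hL.1 0), smul_add, smul_smul,
        neg_mul, inv_mul_cancel₀ (hL.coeff_single_self_ne_zero 0)]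
      simp
    have hw1 : w.IsHomogeneous 1 := (homogeneousSubmodule (Fin m) F 1).smul_mem _
      (isHomogeneous_substZero (isHomogeneous_zero _ _ _) (hL.1 0))
    have hL' := hL.substZero_of_sub_eq hw1 (s := -c⁻¹) (by rw [neg_smul, ← hw, neg_sub])
    exact squarefreeSpan_sup_eq_top_of_X_zero_mul_mem
      hL.substZero_zero.squarefreeSpan_sup_eq_top
      (X_zero_mul_mem_squarefreeSpan_sup hw hL'.squarefreeSpan_sup_eq_top)

end MvPolynomial

lemma Submodule.map_mkₐ_eq_top_of_sup_eq_top {F A : Type*} [Field F] [CommRing A] [Algebra F A]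
    {I : Ideal A} {p : Submodule F A} (h : p ⊔ I.restrictScalars F = ⊤) :
    p.map (Ideal.Quotient.mkₐ F I).toLinearMap = ⊤ := by
  refine eq_top_iff.mpr fun y _ => ?_
  obtain ⟨g, rfl⟩ := Ideal.Quotient.mk_surjective y
  obtain ⟨v, hv, z, hz, rfl⟩ := Submodule.mem_sup.mp (h ▸ Submodule.mem_top (x := g))
  exact ⟨v, hv, by simp [Ideal.Quotient.eq_zero_iff_mem.mpr hz]⟩

/-- If `f i = xᵢ · Lᵢ` (each `Lᵢ` a linear form) is a regular sequence in
`F[x_1,...,x_n]`, then the quotient by `⟨f_1,...,f_n⟩` is spanned, as an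
`F`-vector space, by the classes of the square-free monomials. -/
theorem stmt4 (F : Type) [Field F] (n : ℕ)
    (L : Fin n → MvPolynomial (Fin n) F)
    (hlin : ∀ i, (L i).IsHomogeneous 1)
    (hreg : IsPartialRegSeq F (Fin n) (fun i => X i * L i)) :
    Submodule.span F
        (Set.range fun s : Finset (Fin n) =>
          Ideal.Quotient.mk (Ideal.span (Set.range fun i => X i * L i))
            (∏ i ∈ s, X i)) = ⊤ := by
  have hrad : ∀ i, X i ∈ (spanXMul L).radical := fun i =>
    ⟨n + 1, hreg.mem_span_of_isHomogeneous (fun i => (isHomogeneous_X F i).mul (hlin i))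
      (isHomogeneous_X_pow i (n + 1))⟩
  have htop := Submodule.map_mkₐ_eq_top_of_sup_eq_top
    (isMixedIndependent_of_X_mem_radical hlin hrad).squarefreeSpan_sup_eq_top
  rwa [squarefreeSpan, Submodule.map_span, ← Set.range_comp] at htop
end

section
/- Let F be a field, n ≥ 1, N_1,...,N_n positive integers, and fix scalars λ_{i,j}^k ∈ F for 1 ≤ i ≤ n, j ≠ i, 0 ≤ k ≤ N_i−1. In the polynomial ring F[Z_{i,k} | 1 ≤ i ≤ n, 1 ≤ k ≤ N_i], let J be the ideal generated by the products Z_{i,j}·L_{i,j} for all 1 ≤ i ≤ n, 1 ≤ j ≤ N_i. Then for each 1 ≤ i ≤ n, the polynomial Z_{i,N_i} · ∏_{k=0}^{N_i−1} (Z_{i,N_i} − Σ_{j≠i} λ_{i,j}^k Z_{j,N_j}) belongs to J. Consequently there is a well-defined F-algebra homomorphism φ : A → Â with φ(x_i) = Z_{i,N_i}, where A = F[x_1,...,x_n]/⟨x_i·∏_{k=0}^{N_i−1}(x_i − Σ_{j≠i} λ_{i,j}^k x_j) | 1 ≤ i ≤ n⟩ and Â = F[Z_{i,k}]/J. -/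
/-!
Work in `Â = F[Z] ⧸ J` and fix `i`. Write `y = Z_{i,N_i}`, `u_s = Z_{i,s+1}` with partial sums
`S_t = u_0 + ⋯ + u_{t-1}`, and `c_k = ∑_{j ≠ i} λᵏ_{i,j} Z_{j,N_j}`. With `m = N_i - 1`, the
generators of `J` say `y (y - c_0 - S_m) = 0` and `u_t (S_{t+1} - e_t) = 0` for `t < m`, where
`e_t = c_{m-t} - c_0`. Since `a - b` divides `f(a) - f(b)` for every polynomial `f`, the second
family gives `S_m ∏_{t<m} (S_m - e_t) = 0` by induction on `m`, and the first lets us replace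
`y - c_0` by `S_m` in `y f(y - c_0)`. Taking `f = X ∏_{t<m} (X - e_t)` turns
`y ∏_{k ≤ m} (y - c_k)` into zero. The homomorphism `φ` is then induced by `x_i ↦ Z_{i,N_i}`.
-/

open MvPolynomial Finset

/-- The variable `Z_{i, N i}` (top variable of the `i`-th block) in
`F[Z_{i,k} | 1 ≤ i ≤ n, 1 ≤ k ≤ N i]`; the index `⟨i, t⟩` with `t : Fin (N i)`
represents the variable `Z_{i, t+1}`. -/
noncomputable def Ztop {F : Type} [Field F] {n : ℕ} (N : Fin n → ℕ) (hN : ∀ i, 0 < N i)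
    (i : Fin n) : MvPolynomial ((i : Fin n) × Fin (N i)) F :=
  X ⟨i, ⟨N i - 1, Nat.sub_lt (hN i) Nat.one_pos⟩⟩

/-- The linear form `L_{i,j}` (at index `p = ⟨i, j-1⟩`):
`L_{i,N i} = Z_{i,1} + ⋯ + Z_{i,N i - 1} - Z_{i,N i} + ∑_{j ≠ i} λ⁰_{i,j} Z_{j,N j}`,
and for `1 ≤ k ≤ N i - 1`,
`L_{i,k} = Z_{i,1} + ⋯ + Z_{i,k} - ∑_{j ≠ i} (λ^{N i - k}_{i,j} - λ⁰_{i,j}) Z_{j,N j}`. -/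
noncomputable def Lform {F : Type} [Field F] {n : ℕ} (N : Fin n → ℕ) (hN : ∀ i, 0 < N i)
    (lam : Fin n → Fin n → ℕ → F) (p : (i : Fin n) × Fin (N i)) :
    MvPolynomial ((i : Fin n) × Fin (N i)) F :=
  if p.2.val + 1 = N p.1 then
    (∑ t ∈ univ.filter fun t : Fin (N p.1) => t.val + 1 < N p.1, X (⟨p.1, t⟩ : (i : Fin n) × Fin (N i)))
      - X p
      + ∑ j ∈ univ.erase p.1, C (lam p.1 j 0) * Ztop N hN j
  else
    (∑ t ∈ univ.filter fun t : Fin (N p.1) => t.val ≤ p.2.val, X (⟨p.1, t⟩ : (i : Fin n) × Fin (N i)))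
      - ∑ j ∈ univ.erase p.1,
          C (lam p.1 j (N p.1 - (p.2.val + 1)) - lam p.1 j 0) * Ztop N hN j


namespace Polynomial

variable {R : Type*} [CommRing R]

theorem mul_eval_eq_mul_eval_of_mul_sub_eq_zero (p : R[X]) {a x y : R} (h : a * (x - y) = 0) :
    a * p.eval x = a * p.eval y := by
  obtain ⟨q, hq⟩ := sub_dvd_eval_sub x y p
  rw [← sub_eq_zero, ← mul_sub, hq, ← mul_assoc, h, zero_mul]

end Polynomial

section PartialSums

open Polynomial

variable {R : Type*} [CommRing R]

theorem partialSum_mul_prod_eq_zero {u e : ℕ → R} (m : ℕ)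
    (hu : ∀ t < m, u t * (∑ s ∈ range (t + 1), u s - e t) = 0) :
    (∑ s ∈ range m, u s) * ∏ t ∈ range m, (∑ s ∈ range m, u s - e t) = 0 := by
  induction m with
  | zero => simp
  | succ m ih =>
    set S := ∑ s ∈ range m, u s
    set p : R[X] := Polynomial.X * ∏ t ∈ range m, (Polynomial.X - Polynomial.C (e t))
    have hp : ∀ x, p.eval x = x * ∏ t ∈ range m, (x - e t) := fun x => by
      simp [p, Polynomial.eval_prod]
    have hstep : (S + u m - e m) * (S + u m - S) = 0 := by
      simpa [S, sum_range_succ, mul_comm] using hu m (Nat.lt_succ_self m)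
    calc (∑ s ∈ range (m + 1), u s) * ∏ t ∈ range (m + 1), (∑ s ∈ range (m + 1), u s - e t)
        = (S + u m - e m) * p.eval (S + u m) := by
          rw [hp, sum_range_succ, prod_range_succ]; ring
      _ = (S + u m - e m) * p.eval S := mul_eval_eq_mul_eval_of_mul_sub_eq_zero p hstep
      _ = 0 := by rw [hp, ih fun t ht => hu t (Nat.lt_succ_of_lt ht), mul_zero]

theorem mul_prod_sub_eq_zero_of_partialSum_relations {m : ℕ} {y : R}
    {u c : ℕ → R} (htop : y * (y - c 0 - ∑ s ∈ range m, u s) = 0)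
    (hu : ∀ t < m, u t * (∑ s ∈ range (t + 1), u s - (c (m - t) - c 0)) = 0) :
    y * ∏ k ∈ range (m + 1), (y - c k) = 0 := by
  set e : ℕ → R := fun t => c (m - t) - c 0
  set p : R[X] := Polynomial.X * ∏ t ∈ range m, (Polynomial.X - Polynomial.C (e t))
  have hp : ∀ x, p.eval x = x * ∏ t ∈ range m, (x - e t) := fun x => by
    simp [p, Polynomial.eval_prod]
  have hreflect : ∏ k ∈ range m, (y - c (k + 1)) = ∏ t ∈ range m, (y - c 0 - e t) := by
    rw [← prod_range_reflect]
    refine prod_congr rfl fun t ht => ?_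
    rw [show m - 1 - t + 1 = m - t by rw [mem_range] at ht; omega]
    ring
  calc y * ∏ k ∈ range (m + 1), (y - c k) = y * p.eval (y - c 0) := by
        rw [prod_range_succ', hreflect, hp]; ring
    _ = y * p.eval (∑ s ∈ range m, u s) := mul_eval_eq_mul_eval_of_mul_sub_eq_zero p htop
    _ = 0 := by rw [hp, partialSum_mul_prod_eq_zero m hu, mul_zero]

end PartialSums

section Relations

variable {F : Type} [Field F] {n : ℕ} (N : Fin n → ℕ) (hN : ∀ i, 0 < N i)
  (lam : Fin n → Fin n → ℕ → F)

noncomputable def crossForm (i : Fin n) (k : ℕ) : MvPolynomial ((i : Fin n) × Fin (N i)) F :=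
  ∑ j ∈ univ.erase i, C (lam i j k) * Ztop N hN j

noncomputable def lformIdeal : Ideal (MvPolynomial ((i : Fin n) × Fin (N i)) F) :=
  Ideal.span (Set.range fun p => X p * Lform N hN lam p)

local notation "π" => Ideal.Quotient.mk (lformIdeal N hN lam)

/-- `blockVar i s` is the class of `Z_{i,s+1}` for `s < N i`, and `0` otherwise. -/
noncomputable def blockVar (i : Fin n) (s : ℕ) :
    MvPolynomial ((i : Fin n) × Fin (N i)) F ⧸ lformIdeal N hN lam :=
  if h : s < N i then π (X ⟨i, ⟨s, h⟩⟩) else 0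

theorem mk_X_mul_Lform (p : (i : Fin n) × Fin (N i)) : π (X p * Lform N hN lam p) = 0 :=
  Ideal.Quotient.eq_zero_iff_mem.mpr (Ideal.subset_span ⟨p, rfl⟩)

theorem mk_sum_X_filter {i : Fin n} {k : ℕ} (hk : k ≤ N i) (P : Fin (N i) → Prop)
    [DecidablePred P] (hP : ∀ t, P t ↔ t.val < k) :
    π (∑ t ∈ univ.filter P, X ⟨i, t⟩) = ∑ s ∈ range k, blockVar N hN lam i s := by
  have hblock : ∀ t : Fin (N i), blockVar N hN lam i t = π (X ⟨i, t⟩) := fun t => by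
    simp [blockVar]
  have hrange : (range (N i)).filter (· < k) = range k := by
    ext s; simp only [mem_filter, mem_range]; omega
  calc π (∑ t ∈ univ.filter P, X ⟨i, t⟩)
      = ∑ t : Fin (N i), if (t : ℕ) < k then blockVar N hN lam i t else 0 := by
        rw [map_sum, sum_filter]
        exact sum_congr rfl fun t _ => by simp only [hP, hblock]
    _ = ∑ s ∈ range (N i), if s < k then blockVar N hN lam i s else 0 :=
        Fin.sum_univ_eq_sum_range (fun s => if s < k then blockVar N hN lam i s else 0) _
    _ = ∑ s ∈ range k, blockVar N hN lam i s := by rw [← sum_filter, hrange]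

theorem Ztop_relation (i : Fin n) :
    π (Ztop N hN i) * (π (Ztop N hN i) - π (crossForm N hN lam i 0)
      - ∑ s ∈ range (N i - 1), blockVar N hN lam i s) = 0 := by
  have h := mk_X_mul_Lform N hN lam ⟨i, ⟨N i - 1, Nat.sub_lt (hN i) Nat.one_pos⟩⟩
  rw [Lform, if_pos (Nat.sub_add_cancel (hN i)), map_mul, map_add, map_sub,
    mk_sum_X_filter N hN lam (k := N i - 1) (Nat.sub_le _ _) _ (fun t => by simp only; omega)] at h
  rw [← neg_eq_zero, ← h, Ztop, crossForm]
  ring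

theorem blockVar_relation (i : Fin n) {t : ℕ} (ht : t + 1 < N i) :
    blockVar N hN lam i t * (∑ s ∈ range (t + 1), blockVar N hN lam i s
      - (π (crossForm N hN lam i (N i - (t + 1))) - π (crossForm N hN lam i 0))) = 0 := by
  have h := mk_X_mul_Lform N hN lam ⟨i, ⟨t, by omega⟩⟩
  rw [Lform, if_neg (by simp only; omega), map_mul, map_sub,
    mk_sum_X_filter N hN lam (k := t + 1) ht.le _ (fun s => by simp only; omega)] at h
  rw [blockVar, dif_pos (by omega), ← h, crossForm, crossForm, ← map_sub, ← sum_sub_distrib]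
  simp only [C_sub, sub_mul]

theorem mk_Ztop_mul_prod_eq_zero (i : Fin n) :
    π (Ztop N hN i * ∏ k ∈ range (N i), (Ztop N hN i - crossForm N hN lam i k)) = 0 := by
  obtain ⟨m, hm⟩ := Nat.exists_eq_add_one_of_ne_zero (hN i).ne'
  rw [map_mul, map_prod, hm]
  simp only [map_sub]
  refine mul_prod_sub_eq_zero_of_partialSum_relations (u := blockVar N hN lam i) ?_ fun t ht => ?_
  · simpa only [hm, Nat.add_sub_cancel] using Ztop_relation N hN lam i
  · simpa only [hm, Nat.add_sub_add_right] using blockVar_relation N hN lam i (t := t) (by omega)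

end Relations

/-- For each `i`, the polynomial
`Z_{i,N i} · ∏_{k=0}^{N i - 1} (Z_{i,N i} - ∑_{j ≠ i} λᵏ_{i,j} Z_{j,N j})` lies in the
ideal `J = ⟨Z_{i,j} · L_{i,j}⟩`; consequently there is a well-defined `F`-algebra
homomorphism `φ : A → Â` with `φ(xᵢ) = Z_{i,N i}`, where
`A = F[x] ⧸ ⟨xᵢ · ∏ₖ (xᵢ - ∑_{j ≠ i} λᵏ_{i,j} xⱼ)⟩` and `Â = F[Z] ⧸ J`. -/
theorem stmt7 (F : Type) [Field F] (n : ℕ) (N : Fin n → ℕ) (hN : ∀ i, 0 < N i)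
    (lam : Fin n → Fin n → ℕ → F) :
    (∀ i : Fin n,
      Ztop N hN i *
        ∏ k ∈ Finset.range (N i),
          (Ztop N hN i - ∑ j ∈ univ.erase i, C (lam i j k) * Ztop N hN j) ∈
      Ideal.span (Set.range fun p : (i : Fin n) × Fin (N i) =>
        X p * Lform N hN lam p)) ∧
    ∃ φ : (MvPolynomial (Fin n) F ⧸
            (Ideal.span (Set.range fun i : Fin n =>
              X i * ∏ k ∈ Finset.range (N i),
                (X i - ∑ j ∈ univ.erase i, C (lam i j k) * X j)) : Ideal (MvPolynomial (Fin n) F))) →ₐ[F]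
          (MvPolynomial ((i : Fin n) × Fin (N i)) F ⧸
            Ideal.span (Set.range fun p : (i : Fin n) × Fin (N i) =>
              X p * Lform N hN lam p)),
      ∀ i : Fin n,
        φ (Ideal.Quotient.mk _ (X i)) = Ideal.Quotient.mk _ (Ztop N hN i) := by
  have hmem (i : Fin n) := Ideal.Quotient.eq_zero_iff_mem.mp (mk_Ztop_mul_prod_eq_zero N hN lam i)
  refine ⟨hmem, Ideal.quotientMapₐ _ (aeval (Ztop N hN)) ?_, fun i => by simp⟩
  refine Ideal.span_le.mpr ?_
  rintro _ ⟨i, rfl⟩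
  simpa [lformIdeal, crossForm] using hmem i
end

section
/- Let F be a field, N_1,...,N_n positive integers, and λ_{i,j}^k ∈ F fixed scalars. Let A = F[x_1,...,x_n]/⟨x_i·∏_{k=0}^{N_i−1}(x_i − Σ_{j≠i} λ_{i,j}^k x_j) | 1 ≤ i ≤ n⟩ and let Â = F[Z_{i,k} | 1 ≤ i ≤ n, 1 ≤ k ≤ N_i]/⟨Z_{i,j}·L_{i,j} | 1 ≤ i ≤ n, 1 ≤ j ≤ N_i⟩. If A is Artinian (finite-dimensional as an F-vector space), then Â is also Artinian (finite-dimensional as an F-vector space). -/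
/-!
A quotient of a polynomial ring in finitely many variables is finite-dimensional as soon as every
variable is nilpotent in it, i.e. vanishes under every homomorphism `π` to a domain killing the
relations. Since the relations of `A` are homogeneous and `A` is finite-dimensional, a power of
each `x_i` lies in their ideal, so `0` is the only point of a domain satisfying them.

Given `π` killing every `Z_{i,k} L_{i,k}`, put `w_i = π(Z_{i,N_i})` and
`μ_i^k = ∑_{j ≠ i} λ_{i,j}^k w_j`. Going up the block `i`, each partial sum
`Z_{i,1} + ⋯ + Z_{i,k}` stays of the form `μ_i^l - μ_i^0`: when `Z_{i,k} ≠ 0`, the relation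
`L_{i,k} = 0` resets it to `μ_i^{N_i-k} - μ_i^0`. If `w_i ≠ 0`, then `L_{i,N_i} = 0` says that
`w_i - μ_i^0` is the full partial sum, so `w_i` is one of the `μ_i^l`. Hence `w` satisfies the
relations of `A` and vanishes; then all `μ_i^k` vanish, the relations become
`Z_{i,k} (Z_{i,1} + ⋯ + Z_{i,k}) = 0`, and induction on `k` kills every `Z_{i,k}`.
-/

open MvPolynomial Finset

namespace MvPolynomial

variable {σ F : Type*} [Field F]

theorem finiteDimensional_quotient_of_X_mem_radical [Finite σ] {I : Ideal (MvPolynomial σ F)}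
    (h : ∀ p, X p ∈ I.radical) : FiniteDimensional F (MvPolynomial σ F ⧸ I) := by
  have hX : ∀ p, IsIntegral F (Ideal.Quotient.mk I (X p)) := fun p => by
    obtain ⟨m, hm⟩ := h p
    refine IsIntegral.of_pow m.succ_pos ?_
    rw [← map_pow, pow_succ, Ideal.Quotient.eq_zero_iff_mem.mpr (I.mul_mem_right _ hm)]
    exact isIntegral_zero
  have : Algebra.IsIntegral F (MvPolynomial σ F ⧸ I) := ⟨fun x => by
    obtain ⟨f, rfl⟩ := Ideal.Quotient.mk_surjective x
    induction f using MvPolynomial.induction_on with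
    | C a => exact isIntegral_algebraMap
    | add p q hp hq => simpa only [map_add] using hp.add hq
    | mul_X p j hp => simpa only [map_mul] using hp.mul (hX j)⟩
  exact Algebra.IsIntegral.finite

theorem homogeneousComponent_aeval_X {R : Type*} [CommSemiring R] (m : ℕ) (q : Polynomial R)
    (i : σ) : homogeneousComponent m (Polynomial.aeval (X i : MvPolynomial σ R) q) =
      q.coeff m • X i ^ m := by
  rw [Polynomial.aeval_eq_sum_range' (n := max m q.natDegree + 1) (by omega), map_sum]
  simp_rw [LinearMap.map_smul, homogeneousComponent_of_mem (isHomogeneous_X_pow i _),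
    smul_ite, smul_zero]
  rw [sum_ite_eq, if_pos (mem_range.mpr (by omega))]

attribute [local instance] gradedAlgebra in
theorem X_mem_radical_span_of_isHomogeneous {s : Set (MvPolynomial σ F)}
    (hs : ∀ f ∈ s, ∃ d, f.IsHomogeneous d)
    [FiniteDimensional F (MvPolynomial σ F ⧸ Ideal.span s)] (i : σ) :
    X i ∈ (Ideal.span s).radical := by
  set I := Ideal.span s
  have hI : I.IsHomogeneous (homogeneousSubmodule σ F) := Ideal.homogeneous_span _ _ fun f hf =>
    (hs f hf).imp fun d hd => (mem_homogeneousSubmodule d f).mpr hd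
  obtain ⟨q, hq, hqI⟩ := IsIntegral.of_finite F (Ideal.Quotient.mkₐ F I (X i))
  have hq_mem : Polynomial.aeval (X i) q ∈ I := by
    rw [← Ideal.Quotient.eq_zero_iff_mem, ← Ideal.Quotient.mkₐ_eq_mk F,
      ← Polynomial.aeval_algHom_apply]
    exact hqI
  refine ⟨q.natDegree, ?_⟩
  have hcomp : homogeneousComponent q.natDegree (Polynomial.aeval (X i) q) ∈ I := by
    rw [← decomposition.decompose'_apply]
    exact hI q.natDegree hq_mem
  rwa [homogeneousComponent_aeval_X, hq.coeff_natDegree, one_smul] at hcomp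

end MvPolynomial

section PartialSums

variable {D : Type*} [CommRing D] [NoZeroDivisors D] {m : ℕ} {a μ : ℕ → D}

theorem exists_sum_range_eq_sub
    (h : ∀ r < m, a r * (∑ t ∈ range (r + 1), a t - (μ (m - r) - μ 0)) = 0) :
    ∀ j ≤ m, ∃ k ≤ m, ∑ t ∈ range j, a t = μ k - μ 0
  | 0, _ => ⟨0, Nat.zero_le m, by simp⟩
  | j + 1, hj => by
    obtain ⟨k, hk, hsum⟩ := exists_sum_range_eq_sub h j (by omega)
    rcases mul_eq_zero.mp (h j (by omega)) with ha | ha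
    · exact ⟨k, hk, by rw [sum_range_succ, ha, add_zero, hsum]⟩
    · exact ⟨m - j, by omega, sub_eq_zero.mp ha⟩

theorem mul_prod_sub_eq_zero_of_mul_sum_range {w : D}
    (htop : w * (∑ t ∈ range m, a t - w + μ 0) = 0)
    (h : ∀ r < m, a r * (∑ t ∈ range (r + 1), a t - (μ (m - r) - μ 0)) = 0) :
    w * ∏ k ∈ range (m + 1), (w - μ k) = 0 := by
  rcases mul_eq_zero.mp htop with hw | hw
  · rw [hw, zero_mul]
  obtain ⟨k, hk, hsum⟩ := exists_sum_range_eq_sub h m le_rfl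
  exact mul_eq_zero_of_right _ <|
    prod_eq_zero (mem_range.mpr (Nat.lt_succ_of_le hk)) (by linear_combination -hw + hsum)

theorem eq_zero_of_mul_sum_range_eq_zero (h : ∀ r < m, a r * ∑ t ∈ range (r + 1), a t = 0) :
    ∀ r < m, a r = 0 := by
  intro r
  induction r using Nat.strong_induction_on with
  | _ r ih =>
    intro hr
    have hprev : ∑ t ∈ range r, a t = 0 :=
      sum_eq_zero fun t ht => ih t (mem_range.mp ht) ((mem_range.mp ht).trans hr)
    have hr' := h r hr
    rwa [sum_range_succ, hprev, zero_add, mul_self_eq_zero] at hr'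

end PartialSums

theorem Fin.sum_filter_eq_sum_range {M : Type*} [AddCommMonoid M] {N r : ℕ} (hr : r ≤ N)
    (p : ℕ → Prop) [DecidablePred p] (hp : ∀ k < N, p k ↔ k < r) (f : ℕ → M) :
    ∑ t ∈ univ.filter (fun t : Fin N => p t), f t = ∑ k ∈ range r, f k := by
  refine (sum_map _ Fin.valEmbedding f).symm.trans (sum_congr ?_ fun _ _ => rfl)
  ext k
  simp only [mem_map, mem_filter, mem_univ, true_and, Fin.valEmbedding_apply, mem_range]
  constructor
  · rintro ⟨t, ht, rfl⟩
    exact (hp t t.isLt).mp ht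
  · intro hk
    exact ⟨⟨k, by omega⟩, (hp k (by omega)).mpr hk, rfl⟩

section Point

variable {F : Type} [Field F] {n : ℕ} (N : Fin n → ℕ) (hN : ∀ i, 0 < N i)
  (lam : Fin n → Fin n → ℕ → F) {D : Type*} [CommRing D]
  (π : MvPolynomial ((i : Fin n) × Fin (N i)) F →+* D)

noncomputable def baseRelation (i : Fin n) : MvPolynomial (Fin n) F :=
  X i * ∏ k ∈ range (N i), (X i - ∑ j ∈ univ.erase i, C (lam i j k) * X j)

theorem isHomogeneous_baseRelation (i : Fin n) :
    (baseRelation N lam i).IsHomogeneous (1 + N i) := by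
  have hfactor : ∀ k ∈ range (N i),
      (X i - ∑ j ∈ univ.erase i, C (lam i j k) * X j : MvPolynomial (Fin n) F).IsHomogeneous 1 :=
    fun k _ => (isHomogeneous_X F i).sub (IsHomogeneous.sum _ _ _ fun j _ =>
      isHomogeneous_C_mul_X _ _)
  rw [baseRelation]
  simpa only [sum_const, card_range, smul_eq_mul, mul_one] using
    (isHomogeneous_X F i).mul (IsHomogeneous.prod _ _ _ hfactor)

/-- `π (Z_{i,k+1})`, extended by zero beyond the block so that partial sums of a block are sums
over `range`. -/
noncomputable def blockValue (i : Fin n) (k : ℕ) : D :=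
  if h : k < N i then π (X ⟨i, k, h⟩) else 0

/-- `μ_i^k = ∑_{j ≠ i} λ_{i,j}^k π(Z_{j,N_j})`: at the point `w_j = π(Z_{j,N_j})` these are the
roots `x_i = μ_i^k` of the `i`-th relation of `A`. -/
noncomputable def topCombination (i : Fin n) (k : ℕ) : D :=
  ∑ j ∈ univ.erase i, π (C (lam i j k)) * π (Ztop N hN j)

variable {N π}

theorem blockValue_val (i : Fin n) (t : Fin (N i)) : blockValue N π i t = π (X ⟨i, t⟩) :=
  dif_pos t.isLt

theorem blockValue_sub_one (i : Fin n) : blockValue N π i (N i - 1) = π (Ztop N hN i) :=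
  dif_pos (Nat.sub_lt (hN i) Nat.one_pos)

theorem map_Lform_of_val_add_one_eq {i : Fin n} {t : Fin (N i)} (ht : t.val + 1 = N i) :
    π (Lform N hN lam ⟨i, t⟩) = ∑ k ∈ range t, blockValue N π i k - blockValue N π i t +
      topCombination N hN lam π i 0 := by
  rw [Lform, if_pos ht]
  simp only [map_add, map_sub, map_sum, map_mul, ← blockValue_val]
  rw [Fin.sum_filter_eq_sum_range t.isLt.le (fun k => k + 1 < N i) (fun k _ => by omega)]
  rfl

theorem map_Lform_of_val_add_one_ne {i : Fin n} {t : Fin (N i)} (ht : t.val + 1 ≠ N i) :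
    π (Lform N hN lam ⟨i, t⟩) = ∑ k ∈ range (t + 1), blockValue N π i k -
      (topCombination N hN lam π i (N i - (t + 1)) - topCombination N hN lam π i 0) := by
  rw [Lform, if_neg ht]
  simp only [map_sub, map_sum, map_mul, ← blockValue_val, topCombination, sub_mul,
    sum_sub_distrib]
  rw [Fin.sum_filter_eq_sum_range t.isLt (· ≤ t.val) (fun k _ => by omega)]

variable {hN lam}

theorem blockValue_mul_map_Lform (hz : ∀ p, π (X p * Lform N hN lam p) = 0) {i : Fin n} {r : ℕ}
    (hr : r < N i) : blockValue N π i r * π (Lform N hN lam ⟨i, r, hr⟩) = 0 := by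
  have h := hz ⟨i, r, hr⟩
  rwa [map_mul, ← blockValue_val] at h

variable [IsDomain D]

theorem map_Ztop_mul_prod_eq_zero (hz : ∀ p, π (X p * Lform N hN lam p) = 0) (i : Fin n) :
    π (Ztop N hN i) * ∏ k ∈ range (N i), (π (Ztop N hN i) - topCombination N hN lam π i k) =
      0 := by
  have hm : N i - 1 + 1 = N i := Nat.sub_add_cancel (hN i)
  have htop := blockValue_mul_map_Lform hz (Nat.sub_lt (hN i) Nat.one_pos)
  rw [map_Lform_of_val_add_one_eq hN lam (t := ⟨N i - 1, _⟩) hm, blockValue_sub_one] at htop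
  have h := mul_prod_sub_eq_zero_of_mul_sum_range htop fun r hr => by
    have hlow := blockValue_mul_map_Lform hz (show r < N i by omega)
    rwa [map_Lform_of_val_add_one_ne hN lam (show r + 1 ≠ N i by omega),
      show N i - (r + 1) = N i - 1 - r by omega] at hlow
  rwa [hm] at h

theorem map_Ztop_eq_zero (hz : ∀ p, π (X p * Lform N hN lam p) = 0)
    (hrad : ∀ i, X i ∈ (Ideal.span (Set.range (baseRelation N lam))).radical) (i : Fin n) :
    π (Ztop N hN i) = 0 := by
  let ε : MvPolynomial (Fin n) F →+* D := eval₂Hom (π.comp C) fun j => π (Ztop N hN j)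
  have hker : Ideal.span (Set.range (baseRelation N lam)) ≤ RingHom.ker ε := by
    rw [Ideal.span_le]
    rintro _ ⟨j, rfl⟩
    rw [SetLike.mem_coe, RingHom.mem_ker, ← map_Ztop_mul_prod_eq_zero hz j]
    simp [ε, baseRelation, topCombination]
  simpa [ε] using (RingHom.ker_isPrime ε).isRadical.radical_le_iff.mpr hker (hrad i)

theorem map_X_eq_zero (hz : ∀ p, π (X p * Lform N hN lam p) = 0)
    (hrad : ∀ i, X i ∈ (Ideal.span (Set.range (baseRelation N lam))).radical)
    (p : (i : Fin n) × Fin (N i)) : π (X p) = 0 := by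
  obtain ⟨i, t⟩ := p
  have hcomb : ∀ k, topCombination N hN lam π i k = 0 := fun k =>
    sum_eq_zero fun j _ => by rw [map_Ztop_eq_zero hz hrad j, mul_zero]
  rw [← blockValue_val]
  rcases Nat.lt_or_ge (t.val + 1) (N i) with ht | ht
  · refine eq_zero_of_mul_sum_range_eq_zero (m := N i - 1) (fun r hr => ?_) t (by omega)
    have hlow := blockValue_mul_map_Lform hz (show r < N i by omega)
    rwa [map_Lform_of_val_add_one_ne hN lam (show r + 1 ≠ N i by omega), hcomb, hcomb,
      sub_zero, sub_zero] at hlow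
  · rw [show t.val = N i - 1 by omega, blockValue_sub_one hN, map_Ztop_eq_zero hz hrad]

end Point

/-- If `A = F[x] ⧸ ⟨xᵢ · ∏ₖ (xᵢ - ∑_{j ≠ i} λᵏ_{i,j} xⱼ)⟩` is Artinian
(finite-dimensional over `F`), then so is
`Â = F[Z_{i,k}] ⧸ ⟨Z_{i,j} · L_{i,j}⟩`. -/
theorem stmt8 (F : Type) [Field F] (n : ℕ) (N : Fin n → ℕ) (hN : ∀ i, 0 < N i)
    (lam : Fin n → Fin n → ℕ → F)
    (hA : FiniteDimensional F
      (MvPolynomial (Fin n) F ⧸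
        (Ideal.span (Set.range fun i : Fin n =>
          X i * ∏ k ∈ Finset.range (N i),
            (X i - ∑ j ∈ Finset.univ.erase i, C (lam i j k) * X j)) : Ideal (MvPolynomial (Fin n) F)))) :
    FiniteDimensional F
      (MvPolynomial ((i : Fin n) × Fin (N i)) F ⧸
        Ideal.span (Set.range fun p : (i : Fin n) × Fin (N i) =>
          X p * Lform N hN lam p)) := by
  have : FiniteDimensional F
      (MvPolynomial (Fin n) F ⧸ Ideal.span (Set.range (baseRelation N lam))) := hA
  have hrad : ∀ i, X i ∈ (Ideal.span (Set.range (baseRelation N lam))).radical :=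
    X_mem_radical_span_of_isHomogeneous (by
      rintro _ ⟨i, rfl⟩
      exact ⟨_, isHomogeneous_baseRelation N lam i⟩)
  refine finiteDimensional_quotient_of_X_mem_radical fun p => ?_
  rw [Ideal.radical_eq_sInf, Submodule.mem_sInf]
  rintro P ⟨hIP, hP⟩
  rw [← Ideal.Quotient.eq_zero_iff_mem]
  exact map_X_eq_zero (fun q => Ideal.Quotient.eq_zero_iff_mem.mpr
    (hIP (Ideal.subset_span ⟨q, rfl⟩))) hrad p
end

section
/- Let F be a field, N_1,...,N_n positive integers, and λ_{i,j}^k ∈ F fixed scalars. In the polynomial ring F[Z_{i,k} | 1 ≤ i ≤ n, 1 ≤ k ≤ N_i], let J be the ideal generated by the products Z_{i,j}·L_{i,j}. Then for each 1 ≤ i ≤ n, the product ∏_{k=1}^{N_i−1} (L_{i,N_i−k} + Z_{i,N_i−k+1} + ... + Z_{i,N_i−1}) is congruent to ∏_{k=1}^{N_i−1} L_{i,N_i−k} modulo J. -/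
open MvPolynomial Finset

/-! Write `A_k = L_{i,N_i-k}` and `S_k = Z_{i,N_i-k+1} + ⋯ + Z_{i,N_i-1}`. Multiplying out
`∏ (A_k + S_k)` one factor at a time, the new error term is `S_k · ∏_{j<k} A_j`, and every
variable `Z_{i,m}` in `S_k` finds its own form `L_{i,m} = A_{N_i-m}` among the earlier factors,
so `Z_{i,m} · L_{i,m} ∈ J` divides that term. -/

theorem prod_add_sub_prod_mem_of_forall_mul_prod_lt_mem {R ι : Type*} [CommRing R] [LinearOrder ι]
    (I : Ideal R) (s : Finset ι) (f g : ι → R)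
    (h : ∀ k ∈ s, g k * ∏ j ∈ s with j < k, f j ∈ I) :
    ∏ k ∈ s, (f k + g k) - ∏ k ∈ s, f k ∈ I := by
  induction s using Finset.induction_on_max with
  | empty => simp
  | insert a s ha ih =>
    have ha' : a ∉ s := fun has => lt_irrefl a (ha a has)
    have hfilter : ∀ k ∈ s, ({j ∈ insert a s | j < k} : Finset ι) = {j ∈ s | j < k} := by
      intro k hk
      rw [filter_insert, if_neg (not_lt.mpr (ha k hk).le)]
    have hs : ∀ k ∈ s, g k * ∏ j ∈ s with j < k, f j ∈ I := fun k hk => by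
      rw [← hfilter k hk]; exact h k (mem_insert_of_mem hk)
    have hga : g a * ∏ j ∈ s, f j ∈ I := by
      have := h a (mem_insert_self a s)
      rwa [filter_insert, if_neg (lt_irrefl a), filter_true_of_mem ha] at this
    rw [prod_insert ha', prod_insert ha']
    have expand : (f a + g a) * ∏ k ∈ s, (f k + g k) - f a * ∏ k ∈ s, f k
        = (f a + g a) * (∏ k ∈ s, (f k + g k) - ∏ k ∈ s, f k) + g a * ∏ k ∈ s, f k := by
      ring
    rw [expand]
    exact I.add_mem (I.mul_mem_left _ (ih hs)) hga

/-- For each `i`, the product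
`∏_{k=1}^{N i - 1} (L_{i, N i - k} + Z_{i, N i - k + 1} + ⋯ + Z_{i, N i - 1})`
is congruent to `∏_{k=1}^{N i - 1} L_{i, N i - k}` modulo the ideal
`J = ⟨Z_{i,j} · L_{i,j}⟩`. -/
theorem stmt12 (F : Type) [Field F] (n : ℕ) (N : Fin n → ℕ) (hN : ∀ i, 0 < N i)
    (lam : Fin n → Fin n → ℕ → F) :
    ∀ i : Fin n,
      (∏ k ∈ Finset.Icc 1 (N i - 1),
          (Lform N hN lam ⟨i, ⟨N i - k - 1, by have := hN i; omega⟩⟩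
            + ∑ t ∈ univ.filter fun t : Fin (N i) =>
                N i - k ≤ t.val ∧ t.val + 1 < N i,
                X (⟨i, t⟩ : (i : Fin n) × Fin (N i))))
        - ∏ k ∈ Finset.Icc 1 (N i - 1),
            Lform N hN lam ⟨i, ⟨N i - k - 1, by have := hN i; omega⟩⟩ ∈
      Ideal.span (Set.range fun p : (i : Fin n) × Fin (N i) =>
        X p * Lform N hN lam p) := by
  intro i
  refine prod_add_sub_prod_mem_of_forall_mul_prod_lt_mem _ _ _ _ fun k hk => ?_
  rw [sum_mul]
  refine Ideal.sum_mem _ fun t ht => ?_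
  obtain ⟨hk1, hkN⟩ := mem_Icc.mp hk
  obtain ⟨htk, htN⟩ := (mem_filter.mp ht).2
  have hfactor : Lform N hN lam ⟨i, t⟩ ∣
      ∏ j ∈ Icc 1 (N i - 1) with j < k,
        Lform N hN lam ⟨i, ⟨N i - j - 1, by have := hN i; omega⟩⟩ := by
    have hindex : N i - (N i - 1 - t) - 1 = t := by omega
    have hmem : N i - 1 - t ∈ ({j ∈ Icc 1 (N i - 1) | j < k} : Finset ℕ) := by
      rw [mem_filter, mem_Icc]; omega
    refine (dvd_of_eq ?_).trans (dvd_prod_of_mem _ hmem)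
    exact congrArg (Lform N hN lam) (Sigma.ext rfl (heq_of_eq (Fin.ext hindex.symm)))
  exact Ideal.mem_of_dvd _ (mul_dvd_mul_left _ hfactor) (Ideal.subset_span ⟨⟨i, t⟩, rfl⟩)
end
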